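/- Under the assumptions of Theorem 1 (unbiased independent stochastic gradients g_k^1, g_k^2 with covariance G, quadratic objective J with Hessian 2Σ_x, stepsize ε with ρ = max_i(1 - 2ελ_i(Σ_x))² < 1, threshold rule α_k^i = 1 iff J(w_k - εg_k^i) ≤ J(w_k) - λ, and the symmetric two-agent update), the conditional expected cost satisfies E[J(w_{k+1}) | w_k] ≤ E[(1-α_k^i) | w_k]·λ + ρ·J(w_k) + ε²·Tr(Σ_x G) + (1-ρ)·J(w*) for each i ∈ {1,2}. -/

import Mathlib

/-!
Pointwise, the cost after the two-agent threshold update is at most the average over the agents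
of `(1 - αᵢ) λ + J(w - ε gᵢ)`: if both agents transmit this is convexity of `J` at the midpoint,
and an agent that stays silent has `J w < λ + J(w - ε gᵢ)`. As the two gradients are identically
distributed, both terms of the average have the same expectation.

For the quadratic cost, `J(w - ε g) - J*` has expectation
`((1 - 2εΣ)(w - w*))ᵀ Σ (1 - 2εΣ)(w - w*) + ε² Tr(Σ G)`, the mean step plus the noise, and the
spectral theorem bounds the mean step by `ρ (J w - J*)`.
-/

open Set MeasureTheory ProbabilityTheory Matrix

namespace Matrix

variable {ι : Type*} [Fintype ι]

lemma IsSymm.dotProduct_mulVec_comm {S : Matrix ι ι ℝ} (hS : S.IsSymm) (x y : ι → ℝ) :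
    x ⬝ᵥ S *ᵥ y = y ⬝ᵥ S *ᵥ x := by
  rw [dotProduct_mulVec, ← mulVec_transpose, hS.eq, dotProduct_comm]

lemma IsSymm.mulVec_dotProduct {S : Matrix ι ι ℝ} (hS : S.IsSymm) (x y : ι → ℝ) :
    (S *ᵥ x) ⬝ᵥ y = x ⬝ᵥ S *ᵥ y := by
  rw [← vecMul_transpose, hS.eq, ← dotProduct_mulVec]

lemma PosSemidef.convexOn_dotProduct_mulVec_sub {S : Matrix ι ι ℝ} (hS : S.PosSemidef)
    (c : ι → ℝ) : ConvexOn ℝ univ fun v => (v - c) ⬝ᵥ S *ᵥ (v - c) := by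
  refine ⟨convex_univ, fun x _ y _ a b ha hb hab => ?_⟩
  have hpt : a • x + b • y - c = a • (x - c) + b • (y - c) := by
    calc a • x + b • y - c = a • x + b • y - (a + b) • c := by rw [hab, one_smul]
      _ = a • (x - c) + b • (y - c) := by module
  have hdiff := hS.dotProduct_mulVec_nonneg ((x - c) - (y - c))
  have hsymm := (isHermitian_iff_isSymm.mp hS.1).dotProduct_mulVec_comm (x - c) (y - c)
  simp only [smul_eq_mul, hpt, star_trivial] at hdiff ⊢
  generalize x - c = u, y - c = v at *
  simp only [dotProduct_add, add_dotProduct, dotProduct_sub, sub_dotProduct, mulVec_add,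
    mulVec_sub, mulVec_smul, dotProduct_smul, smul_dotProduct, smul_eq_mul, hsymm] at hdiff ⊢
  obtain rfl : b = 1 - a := by linarith
  -- `a Q(u) + b Q(v) - Q(a u + b v) = a b Q(u - v)` when `a + b = 1`
  nlinarith [mul_nonneg (mul_nonneg ha hb) hdiff]

variable [DecidableEq ι]

open scoped MatrixOrder in
lemma PosSemidef.dotProduct_mulVec_one_sub_smul_le {S : Matrix ι ι ℝ} (hS : S.PosSemidef)
    {c ρ : ℝ} (hρ : ∀ j, (1 - c * hS.1.eigenvalues j) ^ 2 ≤ ρ) (d : ι → ℝ) :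
    ((1 - c • S) *ᵥ d) ⬝ᵥ S *ᵥ ((1 - c • S) *ᵥ d) ≤ ρ * (d ⬝ᵥ S *ᵥ d) := by
  have hsa : IsSelfAdjoint S := hS.1
  have hcfc : cfc (fun x : ℝ => ρ * x - x * (1 - c * x) ^ 2) S = ρ • S - S * (1 - c • S) ^ 2 := by
    rw [cfc_sub .., cfc_const_mul .., cfc_mul .., cfc_pow .., cfc_sub .., cfc_const_one ℝ S,
      cfc_const_mul .., cfc_id' ℝ S]
  have hpsd : (ρ • S - S * (1 - c • S) ^ 2).PosSemidef := by
    rw [← nonneg_iff_posSemidef, ← hcfc]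
    refine cfc_nonneg fun x hx => ?_
    obtain ⟨j, rfl⟩ := hS.1.spectrum_real_eq_range_eigenvalues ▸ hx
    nlinarith [hS.eigenvalues_nonneg j, hρ j]
  have hsymm : (1 - c • S).IsSymm := by
    rw [IsSymm, transpose_sub, transpose_one, transpose_smul, (isHermitian_iff_isSymm.mp hS.1).eq]
  have hcomm : (1 - c • S) * S = S * (1 - c • S) := by noncomm_ring
  have hlhs : ((1 - c • S) *ᵥ d) ⬝ᵥ S *ᵥ ((1 - c • S) *ᵥ d) =
      d ⬝ᵥ (S * (1 - c • S) ^ 2) *ᵥ d := by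
    rw [hsymm.mulVec_dotProduct, mulVec_mulVec, mulVec_mulVec, hcomm, mul_assoc, ← sq]
  have := hpsd.dotProduct_mulVec_nonneg d
  rw [star_trivial, sub_mulVec, dotProduct_sub, smul_mulVec, dotProduct_smul, smul_eq_mul] at this
  linarith

end Matrix

lemma ConvexOn.le_threshold_two_agent_step {E : Type*} [AddCommGroup E] [Module ℝ E]
    {f : E → ℝ} (hf : ConvexOn ℝ univ f) {lam : ℝ} (hlam : 0 ≤ lam) (ε : ℝ) (w x₀ x₁ : E)
    {a₀ a₁ : ℝ} (ha₀ : a₀ = if f (w - ε • x₀) ≤ f w - lam then 1 else 0)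
    (ha₁ : a₁ = if f (w - ε • x₁) ≤ f w - lam then 1 else 0) :
    f (if a₀ = 1 then (if a₁ = 1 then w - (ε / 2) • (x₀ + x₁) else w - ε • x₀)
        else (if a₁ = 1 then w - ε • x₁ else w)) ≤
      ((1 - a₀) * lam + f (w - ε • x₀) + ((1 - a₁) * lam + f (w - ε • x₁))) / 2 := by
  have hmid : f (w - (ε / 2) • (x₀ + x₁)) ≤ (f (w - ε • x₀) + f (w - ε • x₁)) / 2 := by
    have hpt : w - (ε / 2) • (x₀ + x₁) =
        (1 / 2 : ℝ) • (w - ε • x₀) + (1 / 2 : ℝ) • (w - ε • x₁) := by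
      module
    have := hf.2 (mem_univ (w - ε • x₀)) (mem_univ (w - ε • x₁)) (by norm_num : (0 : ℝ) ≤ 1 / 2)
      (by norm_num : (0 : ℝ) ≤ 1 / 2) (by norm_num)
    rw [hpt]
    simp only [smul_eq_mul] at this
    linarith
  split_ifs at ha₀ ha₁ with h₀ h₁ <;> subst ha₀ ha₁ <;>
    simp only [↓reduceIte, zero_ne_one, sub_self, sub_zero, zero_mul, one_mul] <;> linarith

lemma MeasureTheory.integral_le_of_le_average_of_integral_eq {Ω : Type*} [MeasurableSpace Ω]
    {P : Measure Ω} {f : Ω → ℝ} {h : Fin 2 → Ω → ℝ} (hf : Integrable f P)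
    (hh : ∀ i, Integrable (h i) P) (hle : ∀ ω, f ω ≤ (h 0 ω + h 1 ω) / 2)
    (heq : ∫ ω, h 0 ω ∂P = ∫ ω, h 1 ω ∂P) (i : Fin 2) :
    ∫ ω, f ω ∂P ≤ ∫ ω, h i ω ∂P := by
  have : ∫ ω, f ω ∂P ≤ ∫ ω, (h 0 ω + h 1 ω) / 2 ∂P :=
    integral_mono hf (((hh 0).add (hh 1)).div_const 2) hle
  rw [integral_div, integral_add (hh 0) (hh 1)] at this
  fin_cases i <;> simp only [Fin.zero_eta, Fin.mk_one] <;> linarith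

namespace ProbabilityTheory

section Covariance

variable {Ω ι : Type*} [MeasurableSpace Ω] {P : Measure Ω}

noncomputable def covarianceMatrix (X : Ω → ι → ℝ) (P : Measure Ω) : Matrix ι ι ℝ :=
  of fun k l => cov[fun ω => X ω k, fun ω => X ω l; P]

lemma covarianceMatrix_eq {X : Ω → ι → ℝ} {μ : ι → ℝ} {C : Matrix ι ι ℝ}
    (hμ : ∀ k, ∫ ω, X ω k ∂P = μ k)
    (hC : ∀ k l, ∫ ω, (X ω k - μ k) * (X ω l - μ l) ∂P = C k l) :
    covarianceMatrix X P = C := by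
  ext k l
  simp only [covarianceMatrix, of_apply, covariance, hμ]
  exact hC k l

variable [IsProbabilityMeasure P]

lemma covarianceMatrix_const_sub_smul {X : Ω → ι → ℝ}
    (hX : ∀ k, Integrable (fun ω => X ω k) P) (c : ι → ℝ) (ε : ℝ) :
    covarianceMatrix (fun ω => c - ε • X ω) P = ε ^ 2 • covarianceMatrix X P := by
  ext k l
  simp only [covarianceMatrix, of_apply, Matrix.smul_apply, Pi.sub_apply, Pi.smul_apply,
    smul_eq_mul]
  rw [covariance_const_sub_left ((hX k).const_mul ε), covariance_const_sub_right
    ((hX l).const_mul ε), covariance_const_mul_left, covariance_const_mul_right]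
  ring

variable [Fintype ι]

lemma integral_dotProduct_mulVec_self (S : Matrix ι ι ℝ) {X : Ω → ι → ℝ}
    (hX : ∀ k, MemLp (fun ω => X ω k) 2 P) :
    ∫ ω, X ω ⬝ᵥ S *ᵥ X ω ∂P = (fun k => ∫ ω, X ω k ∂P) ⬝ᵥ S *ᵥ (fun k => ∫ ω, X ω k ∂P) +
      (S * covarianceMatrix X P).trace := by
  have hint : ∀ k l, Integrable (fun ω => X ω k * (S k l * X ω l)) P := fun k l => by
    refine (((hX k).integrable_mul (hX l)).const_mul (S k l)).congr (ae_of_all _ fun ω => ?_)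
    simp only [Pi.mul_apply]
    ring
  have hterm : ∀ k l, ∫ ω, X ω k * (S k l * X ω l) ∂P =
      (∫ ω, X ω k ∂P) * (S k l * ∫ ω, X ω l ∂P) + S k l * covarianceMatrix X P l k := by
    intro k l
    rw [covarianceMatrix, of_apply, covariance_comm, covariance_eq_sub (hX k) (hX l)]
    simp only [mul_left_comm (X _ k), integral_const_mul, Pi.mul_apply]
    ring
  simp only [dotProduct, mulVec, Finset.mul_sum, trace, diag, mul_apply]
  rw [integral_finsetSum _ fun k _ => integrable_finsetSum _ fun l _ => hint k l]
  simp only [← Finset.sum_add_distrib, ← hterm]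
  exact Finset.sum_congr rfl fun k _ => integral_finsetSum _ fun l _ => hint k l

variable [DecidableEq ι]

lemma integral_dotProduct_mulVec_sub_smul_le {S : Matrix ι ι ℝ} (hS : S.PosSemidef) {ε ρ : ℝ}
    (hρ : ∀ j, (1 - 2 * ε * hS.1.eigenvalues j) ^ 2 ≤ ρ) (d : ι → ℝ) {g : Ω → ι → ℝ}
    (hg : ∀ k, MemLp (fun ω => g ω k) 2 P) (hmean : ∀ k, ∫ ω, g ω k ∂P = (((2 : ℝ) • S) *ᵥ d) k) :
    ∫ ω, (d - ε • g ω) ⬝ᵥ S *ᵥ (d - ε • g ω) ∂P ≤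
      ρ * (d ⬝ᵥ S *ᵥ d) + ε ^ 2 * (S * covarianceMatrix g P).trace := by
  have hX : ∀ k, MemLp (fun ω => (d - ε • g ω) k) 2 P := fun k =>
    (memLp_const (d k)).sub ((hg k).const_mul ε)
  have hmeanX : (fun k => ∫ ω, (d - ε • g ω) k ∂P) = (1 - (2 * ε) • S) *ᵥ d := by
    funext k
    simp only [Pi.sub_apply, Pi.smul_apply, smul_eq_mul]
    rw [integral_sub (integrable_const _) ((hg k).integrable one_le_two |>.const_mul ε),
      integral_const_mul, hmean, integral_const]
    simp only [sub_mulVec, one_mulVec, smul_mulVec, Pi.sub_apply, Pi.smul_apply, smul_eq_mul,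
      probReal_univ, one_mul]
    ring
  rw [integral_dotProduct_mulVec_self S hX, hmeanX,
    covarianceMatrix_const_sub_smul (fun k => (hg k).integrable one_le_two), Matrix.mul_smul,
    trace_smul, smul_eq_mul]
  gcongr
  exact hS.dotProduct_mulVec_one_sub_smul_le hρ d

lemma integral_quadratic_gradient_step_le {S : Matrix ι ι ℝ} (hS : S.PosSemidef) {ε ρ : ℝ}
    (hρ : ∀ j, (1 - 2 * ε * hS.1.eigenvalues j) ^ 2 ≤ ρ) {J : (ι → ℝ) → ℝ} {wstar : ι → ℝ}
    {Jstar : ℝ} (hJ : ∀ v, J v = (v - wstar) ⬝ᵥ S *ᵥ (v - wstar) + Jstar) (w : ι → ℝ)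
    {g : Ω → ι → ℝ} (hg : ∀ k, MemLp (fun ω => g ω k) 2 P)
    (hmean : ∀ k, ∫ ω, g ω k ∂P = (((2 : ℝ) • S) *ᵥ (w - wstar)) k)
    (hint : Integrable (fun ω => J (w - ε • g ω)) P) :
    ∫ ω, J (w - ε • g ω) ∂P ≤
      ρ * J w + ε ^ 2 * (S * covarianceMatrix g P).trace + (1 - ρ) * Jstar := by
  have hstep := integral_dotProduct_mulVec_sub_smul_le hS hρ (w - wstar) hg hmean
  have hJstep : ∀ ω, (w - wstar - ε • g ω) ⬝ᵥ S *ᵥ (w - wstar - ε • g ω) =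
      J (w - ε • g ω) - Jstar := fun ω => by rw [hJ, sub_right_comm]; ring
  simp only [hJstep] at hstep
  rw [integral_sub hint (integrable_const _), integral_const, probReal_univ, one_smul] at hstep
  rw [hJ w]
  linarith

end Covariance

section Threshold

variable {Ω E : Type*} [MeasurableSpace Ω] {P : Measure Ω} [IsFiniteMeasure P]
  [NormedAddCommGroup E] [NormedSpace ℝ E] [MeasurableSpace E] [BorelSpace E]

lemma integral_threshold_two_agent_step_le {f : E → ℝ} (hf : ConvexOn ℝ univ f)
    (hfc : Continuous f) {lam : ℝ} (hlam : 0 ≤ lam) (ε : ℝ) (w : E) {g : Fin 2 → Ω → E}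
    (hid : IdentDistrib (g 0) (g 1) P P) (hint : ∀ i, Integrable (fun ω => f (w - ε • g i ω)) P)
    {α : Fin 2 → Ω → ℝ} (hα : ∀ i ω, α i ω = if f (w - ε • g i ω) ≤ f w - lam then 1 else 0)
    {wnext : Ω → E} (hnext : ∀ ω, wnext ω =
      if α 0 ω = 1 then (if α 1 ω = 1 then w - (ε / 2) • (g 0 ω + g 1 ω) else w - ε • g 0 ω)
      else (if α 1 ω = 1 then w - ε • g 1 ω else w))
    (hintnext : Integrable (fun ω => f (wnext ω)) P) (i : Fin 2) :
    ∫ ω, f (wnext ω) ∂P ≤ (∫ ω, (1 - α i ω) ∂P) * lam + ∫ ω, f (w - ε • g i ω) ∂P := by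
  have hgm : ∀ i, AEMeasurable (g i) P := fun i => by
    fin_cases i
    exacts [hid.aemeasurable_fst, hid.aemeasurable_snd]
  have hstep : Measurable fun x : E => f (w - ε • x) := by fun_prop
  have hthresh : Measurable fun x : E => if f (w - ε • x) ≤ f w - lam then (1 : ℝ) else 0 :=
    Measurable.ite (measurableSet_le hstep measurable_const) measurable_const measurable_const
  have hslack : ∀ i, Integrable (fun ω => (1 - α i ω) * lam) P := fun i => by
    have hαi : Integrable (α i) P :=
      Integrable.of_mem_Icc 0 1
        ((hthresh.comp_aemeasurable (hgm i)).congr (ae_of_all _ fun ω => (hα i ω).symm))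
        (ae_of_all _ fun ω => by rw [hα]; split_ifs <;> norm_num)
    exact ((integrable_const 1).sub hαi).mul_const lam
  set h : Fin 2 → Ω → ℝ := fun i ω => (1 - α i ω) * lam + f (w - ε • g i ω) with hh
  have heq : ∫ ω, h 0 ω ∂P = ∫ ω, h 1 ω ∂P := by
    simp only [hh, hα]
    exact (hid.comp (((measurable_const.sub hthresh).mul_const lam).add hstep)).integral_eq
  have hle : ∀ ω, f (wnext ω) ≤ (h 0 ω + h 1 ω) / 2 := fun ω => by
    rw [hnext]
    exact hf.le_threshold_two_agent_step hlam ε w (g 0 ω) (g 1 ω) (hα 0 ω) (hα 1 ω)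
  calc ∫ ω, f (wnext ω) ∂P
      ≤ ∫ ω, h i ω ∂P := integral_le_of_le_average_of_integral_eq hintnext
        (fun i => (hslack i).add (hint i)) hle heq i
    _ = (∫ ω, (1 - α i ω) ∂P) * lam + ∫ ω, f (w - ε • g i ω) ∂P := by
        rw [hh, integral_add (hslack i) (hint i), integral_mul_const]

end Threshold

end ProbabilityTheory

open Matrix MeasureTheory ProbabilityTheory Classical in
theorem one_step_descent_inequality_general {n : ℕ} {Ω : Type*} [MeasurableSpace Ω]
    (P : Measure Ω) [IsProbabilityMeasure P]
    (Sx : Matrix (Fin n) (Fin n) ℝ) (hSx : Sx.PosSemidef)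
    (wstar : Fin n → ℝ) (Jstar lam ε ρ : ℝ) (hlam : 0 < lam)
    (J : (Fin n → ℝ) → ℝ)
    -- quadratic objective with Hessian 2Σx, minimizer w*, minimum J*
    (hJ : ∀ v, J v = (v - wstar) ⬝ᵥ Sx.mulVec (v - wstar) + Jstar)
    (hρ : ρ = ⨆ j, (1 - 2 * ε * hSx.1.eigenvalues j) ^ 2)
    (wk : Fin n → ℝ) (g : Fin 2 → Ω → Fin n → ℝ) (G : Matrix (Fin n) (Fin n) ℝ)
    (hmeas : ∀ i, Measurable (g i))
    -- independent and identically distributed stochastic gradients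
    (hident : P.map (g 0) = P.map (g 1))
    (hint2 : ∀ i k l, Integrable (fun ω => g i ω k * g i ω l) P)
    -- unbiased: E[g_i] = ∇J(w_k) = 2Σx (w_k - w*)
    (hmean : ∀ i k, ∫ ω, g i ω k ∂P = ((2 : ℝ) • Sx).mulVec (wk - wstar) k)
    -- covariance G
    (hcov : ∀ i k l,
      ∫ ω, (g i ω k - ((2 : ℝ) • Sx).mulVec (wk - wstar) k) *
          (g i ω l - ((2 : ℝ) • Sx).mulVec (wk - wstar) l) ∂P = G k l)
    -- threshold transmission rule
    (α : Fin 2 → Ω → ℝ)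
    (hα : ∀ i ω, α i ω = if J (wk - ε • g i ω) ≤ J wk - lam then (1 : ℝ) else 0)
    -- symmetric two-agent update
    (wnext : Ω → Fin n → ℝ)
    (hnext : ∀ ω, wnext ω =
      if α 0 ω = 1 then
        (if α 1 ω = 1 then wk - (ε / 2) • (g 0 ω + g 1 ω) else wk - ε • g 0 ω)
      else (if α 1 ω = 1 then wk - ε • g 1 ω else wk))
    (hintJ : ∀ i, Integrable (fun ω => J (wk - ε • g i ω)) P)
    (hintnext : Integrable (fun ω => J (wnext ω)) P) :
    ∀ i : Fin 2, ∫ ω, J (wnext ω) ∂P ≤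
      (∫ ω, (1 - α i ω) ∂P) * lam + ρ * J wk + ε ^ 2 * (Sx * G).trace +
        (1 - ρ) * Jstar := by
  have hJfun : J = fun v => (v - wstar) ⬝ᵥ Sx *ᵥ (v - wstar) + Jstar := funext hJ
  have hJconv : ConvexOn ℝ univ J :=
    hJfun ▸ (hSx.convexOn_dotProduct_mulVec_sub wstar).add_const Jstar
  have hJcont : Continuous J := by rw [hJfun]; fun_prop
  have hρj : ∀ j, (1 - 2 * ε * hSx.1.eigenvalues j) ^ 2 ≤ ρ := fun j =>
    hρ ▸ le_ciSup (f := fun j => (1 - 2 * ε * hSx.1.eigenvalues j) ^ 2)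
      (Set.finite_range _).bddAbove j
  have hg2 : ∀ i k, MemLp (fun ω => g i ω k) 2 P := fun i k =>
    (memLp_two_iff_integrable_sq ((measurable_pi_apply k).comp (hmeas i)).aestronglyMeasurable).2
      (by simpa only [sq, Function.comp_apply] using hint2 i k k)
  have hcost : ∀ i, ∫ ω, J (wk - ε • g i ω) ∂P ≤
      ρ * J wk + ε ^ 2 * (Sx * G).trace + (1 - ρ) * Jstar := fun i => by
    simpa only [covarianceMatrix_eq (hmean i) (hcov i)] using
      integral_quadratic_gradient_step_le hSx hρj hJ wk (hg2 i) (hmean i) (hintJ i)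
  have hid : IdentDistrib (g 0) (g 1) P P :=
    ⟨(hmeas 0).aemeasurable, (hmeas 1).aemeasurable, hident⟩
  intro i
  have := integral_threshold_two_agent_step_le hJconv hJcont hlam.le ε wk hid hintJ hα hnext
    hintnext i
  linarith [hcost i]

open Matrix MeasureTheory ProbabilityTheory Classical in
theorem one_step_descent_inequality {n : ℕ} {Ω : Type*} [MeasurableSpace Ω]
    (P : Measure Ω) [IsProbabilityMeasure P]
    (Sx : Matrix (Fin n) (Fin n) ℝ) (hSx : Sx.PosSemidef)
    (wstar : Fin n → ℝ) (Jstar lam ε ρ : ℝ) (hε : 0 < ε) (hlam : 0 < lam)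
    (J : (Fin n → ℝ) → ℝ)
    -- quadratic objective with Hessian 2Σx, minimizer w*, minimum J*
    (hJ : ∀ v, J v = (v - wstar) ⬝ᵥ Sx.mulVec (v - wstar) + Jstar)
    (hρ : ρ = ⨆ j, (1 - 2 * ε * hSx.1.eigenvalues j) ^ 2) (hρ1 : ρ < 1)
    (wk : Fin n → ℝ) (g : Fin 2 → Ω → Fin n → ℝ) (G : Matrix (Fin n) (Fin n) ℝ)
    (hmeas : ∀ i, Measurable (g i))
    -- independent and identically distributed stochastic gradients
    (hindep : IndepFun (g 0) (g 1) P)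
    (hident : P.map (g 0) = P.map (g 1))
    (hint2 : ∀ i k l, Integrable (fun ω => g i ω k * g i ω l) P)
    -- unbiased: E[g_i] = ∇J(w_k) = 2Σx (w_k - w*)
    (hmean : ∀ i k, ∫ ω, g i ω k ∂P = ((2 : ℝ) • Sx).mulVec (wk - wstar) k)
    -- covariance G
    (hcov : ∀ i k l,
      ∫ ω, (g i ω k - ((2 : ℝ) • Sx).mulVec (wk - wstar) k) *
          (g i ω l - ((2 : ℝ) • Sx).mulVec (wk - wstar) l) ∂P = G k l)
    -- threshold transmission rule
    (α : Fin 2 → Ω → ℝ)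
    (hα : ∀ i ω, α i ω = if J (wk - ε • g i ω) ≤ J wk - lam then (1 : ℝ) else 0)
    -- symmetric two-agent update
    (wnext : Ω → Fin n → ℝ)
    (hnext : ∀ ω, wnext ω =
      if α 0 ω = 1 then
        (if α 1 ω = 1 then wk - (ε / 2) • (g 0 ω + g 1 ω) else wk - ε • g 0 ω)
      else (if α 1 ω = 1 then wk - ε • g 1 ω else wk))
    (hintJ : ∀ i, Integrable (fun ω => J (wk - ε • g i ω)) P)
    (hintnext : Integrable (fun ω => J (wnext ω)) P) :
    ∀ i : Fin 2, ∫ ω, J (wnext ω) ∂P ≤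
      (∫ ω, (1 - α i ω) ∂P) * lam + ρ * J wk + ε ^ 2 * (Sx * G).trace +
        (1 - ρ) * Jstar :=
  one_step_descent_inequality_general P Sx hSx wstar Jstar lam ε ρ hlam J hJ hρ wk g G hmeas hident
    hint2 hmean hcov α hα wnext hnext hintJ hintnext
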